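/- Fix Λ ≥ 0. For x ∈ [1/2, 1] and θ ∈ (0, π/3), set A(x,θ) := (x·tan θ)/2, P(x,θ) := 1 + x/cos θ + √((x−1)² + x² tan² θ), and B̃₂(x,θ) := Λ·A(x,θ) − (4π²/(3+√(π√3))²)·(P(x,θ) + √(4π·A(x,θ)))²/(4·A(x,θ)). Then B̃₂ is monotone non-decreasing in each variable on the region where x² + x² tan² θ ≤ 1: if 1/2 ≤ x ≤ x′ ≤ 1, 0 < θ ≤ θ′ < π/3 and x′² + x′² tan² θ′ ≤ 1, then B̃₂(x,θ) ≤ B̃₂(x′,θ′). -/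

import Mathlib

/-- Area of the triangle with vertices `(0,0)`, `(1,0)`, `(x, x tan θ)`. -/
noncomputable def Atri (x θ : ℝ) : ℝ := x * Real.tan θ / 2

/-- Perimeter of the triangle with vertices `(0,0)`, `(1,0)`, `(x, x tan θ)`. -/
noncomputable def Ptri (x θ : ℝ) : ℝ :=
  1 + x / Real.cos θ + Real.sqrt ((x - 1) ^ 2 + x ^ 2 * Real.tan θ ^ 2)

/-- The auxiliary functional `B̃₂` in the parameters `(x, θ)`. -/
noncomputable def B2t (Λ x θ : ℝ) : ℝ :=
  Λ * Atri x θ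
    - 4 * Real.pi ^ 2 / (3 + Real.sqrt (Real.pi * Real.sqrt 3)) ^ 2
      * (Ptri x θ + Real.sqrt (4 * Real.pi * Atri x θ)) ^ 2 / (4 * Atri x θ)

set_option maxHeartbeats 1000000

open Real Set


lemma alg_x {x c t d : ℝ} (hx : 1/2 ≤ x) (hc : 0 < c) (hxc : x ≤ c)
    (hct : c^2*(1+t^2) = 1) (hd : 0 < d) (hd2 : d^2 = (x-1)^2 + x^2*t^2) :
    2*x*(1/c + (x-1+x*t^2)/d) ≤ 1 + x/c + d := by
  have h1 : 0 ≤ (c - x) * (c*d + x + c) := by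
    apply mul_nonneg (by linarith) (by nlinarith)
  have e1 : c^2*d^2 = x^2 + c^2 - 2*x*c^2 := by linear_combination c^2*hd2 + x^2*hct
  have e2 : 2*x*c^2*(x-1+x*t^2) = 2*x*(x-c^2) := by linear_combination 2*x^2*hct
  have h3 : c*(2*x*d + 2*c*x*(x-1+x*t^2)) ≤ c*(c*d + x*d + c*d^2) := by nlinarith [h1, e1, e2]
  have hpoly : 2*x*d + 2*c*x*(x-1+x*t^2) ≤ c*d + x*d + c*d^2 :=
    le_of_mul_le_mul_left h3 hc
  have lhs_eq : 2*x*(1/c + (x-1+x*t^2)/d) = (2*x*d + 2*c*x*(x-1+x*t^2))/(c*d) := by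
    field_simp
  have rhs_eq : 1 + x/c + d = (c*d + x*d + c*d^2)/(c*d) := by
    field_simp
  rw [lhs_eq, rhs_eq]
  exact div_le_div_of_nonneg_right hpoly (mul_pos hc hd).le

lemma alg_t {x c t d : ℝ} (hx : 1/2 ≤ x) (hx1 : x ≤ 1) (hc : 0 < c) (hxc : x ≤ c)
    (ht : 0 < t) (hct : c^2*(1+t^2) = 1) (hd : 0 < d) (hd2 : d^2 = (x-1)^2 + x^2*t^2) :
    2*(x*t/c + x^2*t*(1/c^2)/d)*t ≤ (1 + x/c + d)*(1/c^2) := by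
  have hx0 : 0 < x := by linarith
  have hx2c2 : x^2 ≤ c^2 := by nlinarith
  have hu1 : x^2 + x^2*t^2 ≤ 1 := by
    nlinarith [mul_le_mul_of_nonneg_right hx2c2 (by positivity : (0:ℝ) ≤ 1+t^2)]
  have h2c : c*(x^2*t^2 - (x-1)^2) ≤ 2*x*c^2*d := by
    rcases le_or_gt (x^2*t^2) ((x-1)^2) with hcase | hcase
    · have h0 : c*(x^2*t^2 - (x-1)^2) ≤ 0 := mul_nonpos_of_nonneg_of_nonpos hc.le (by linarith)
      have h1 : (0:ℝ) ≤ 2*x*c^2*d := by positivity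
      linarith
    · have hw0 : 0 ≤ x^2*t^2 - (x-1)^2 := by linarith
      have hvnn : (0:ℝ) ≤ (x-1)^2 := sq_nonneg _
      have hule : x^2*t^2 ≤ 1 - x^2 := by linarith
      have hwm : x^2*t^2 - (x-1)^2 ≤ 2*x - 2*x^2 := by nlinarith
      have step1 : (x^2*t^2 - (x-1)^2)^2 ≤ (x^2*t^2 - (x-1)^2)*(2*x-2*x^2) := by
        rw [sq]; exact mul_le_mul_of_nonneg_left hwm hw0
      have step2 : (x^2*t^2 - (x-1)^2)*(2*x-2*x^2) ≤ 4*x^4*(x^2*t^2 + (x-1)^2) := by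
        rcases le_or_gt (2*x*(1-x)) (4*x^4) with hs | hs
        · nlinarith [mul_nonneg hw0 (by linarith : (0:ℝ) ≤ 4*x^4 - 2*x*(1-x))]
        · nlinarith [mul_nonneg (by linarith : (0:ℝ) ≤ 1 - x^2 - x^2*t^2)
            (by linarith : (0:ℝ) ≤ 2*x*(1-x) - 4*x^4),
            mul_nonneg (mul_nonneg (by linarith : (0:ℝ) ≤ 2*x-1) (by linarith : (0:ℝ) ≤ 1-x))
              (by positivity : (0:ℝ) ≤ x^2*(1+x))]
      have step3 : 4*x^4*(x^2*t^2 + (x-1)^2) ≤ (2*x*c*d)^2 := by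
        have h4 : 4*x^2*(x^2*t^2+(x-1)^2)*x^2 ≤ 4*x^2*(x^2*t^2+(x-1)^2)*c^2 :=
          mul_le_mul_of_nonneg_left hx2c2 (by positivity)
        nlinarith [h4]
      have hsq : (x^2*t^2 - (x-1)^2)^2 ≤ (2*x*c*d)^2 := by linarith
      have hpos : 0 < 2*x*c*d := by positivity
      have hfin : x^2*t^2 - (x-1)^2 ≤ 2*x*c*d := by nlinarith [hsq, hpos]
      calc c*(x^2*t^2 - (x-1)^2) ≤ c*(2*x*c*d) := mul_le_mul_of_nonneg_left hfin hc.le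
        _ = 2*x*c^2*d := by ring
  have f1 : 2*x*t^2*c^2*d = 2*x*d - 2*x*d*c^2 := by linear_combination 2*x*d*hct
  have f2 : 2*x^2*t^2*c = 2*c*d^2 - 2*c*(x-1)^2 := by linear_combination (-2)*c*hd2
  have f3 : c*(d^2 - 2*(x-1)^2) ≤ 2*x*c^2*d := by
    have he : c*(d^2 - 2*(x-1)^2) = c*(x^2*t^2 - (x-1)^2) := by linear_combination c*hd2
    linarith
  have hdc : 0 ≤ d*(c-x) := mul_nonneg hd.le (by linarith)
  have PT : 2*x*t^2*c^2*d + 2*x^2*t^2*c ≤ c*d + x*d + c*d^2 := by nlinarith [f1, f2, f3, hdc]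
  have lhs_eq : 2*(x*t/c + x^2*t*(1/c^2)/d)*t = (2*x*t^2*c^2*d + 2*x^2*t^2*c)/(c^3*d) := by
    field_simp
  have rhs_eq : (1 + x/c + d)*(1/c^2) = (c*d + x*d + c*d^2)/(c^3*d) := by
    field_simp
  rw [lhs_eq, rhs_eq]
  exact div_le_div_of_nonneg_right PT (by positivity)

lemma cos_sq_one_add_tan_sq {θ : ℝ} (hc : Real.cos θ ≠ 0) :
    Real.cos θ^2*(1+Real.tan θ^2) = 1 := by
  rw [Real.tan_eq_sin_div_cos]
  field_simp
  linarith [Real.sin_sq_add_cos_sq θ]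

lemma Ptri_nonneg {x θ : ℝ} (hx : 0 ≤ x) (hc : 0 < Real.cos θ) : 0 ≤ Ptri x θ := by
  unfold Ptri
  have := Real.sqrt_nonneg ((x - 1) ^ 2 + x ^ 2 * Real.tan θ ^ 2)
  have : 0 ≤ x / Real.cos θ := by positivity
  linarith [Real.sqrt_nonneg ((x - 1) ^ 2 + x ^ 2 * Real.tan θ ^ 2)]

lemma mono_x {τ x x' : ℝ} (hτ0 : 0 < τ) (hτ : τ < Real.pi/2) (hx : 1/2 ≤ x)
    (hxx : x ≤ x') (hx'c : x' ≤ Real.cos τ) :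
    Ptri x' τ ^ 2 * x ≤ Ptri x τ ^ 2 * x' := by
  have hc : 0 < Real.cos τ := Real.cos_pos_of_mem_Ioo ⟨by linarith, hτ⟩
  have ht : 0 < Real.tan τ := Real.tan_pos_of_pos_of_lt_pi_div_two hτ0 hτ
  set t := Real.tan τ with htdef
  set c := Real.cos τ with hcdef
  have hct : c^2*(1+t^2) = 1 := cos_sq_one_add_tan_sq (ne_of_gt hc)
  -- the function
  set f : ℝ → ℝ := fun y => Ptri y τ ^ 2 / y with hf
  have key : ∀ y ∈ Icc x x', HasDerivAt f
      ((2 * Ptri y τ * (1/c + (2*(y-1) + 2*y*t^2)/(2*Real.sqrt ((y-1)^2 + y^2*t^2))) * y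
        - Ptri y τ ^ 2) / y ^ 2) y := by
    intro y hy
    have hy0 : 0 < y := by have := hy.1; linarith
    have hq : 0 < (y-1)^2 + y^2*t^2 := by positivity
    have hq' : HasDerivAt (fun y : ℝ => (y-1)^2 + y^2*t^2) (2*(y-1) + 2*y*t^2) y := by
      have h1 : HasDerivAt (fun y : ℝ => (y-1)^2) (2*(y-1)) y := by
        simpa using ((hasDerivAt_id y).sub_const 1).fun_pow 2
      have h2 : HasDerivAt (fun y : ℝ => y^2*t^2) (2*y*t^2) y := by
        simpa using (hasDerivAt_pow 2 y).mul_const (t^2)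
      exact h1.add h2
    have hD : HasDerivAt (fun y : ℝ => Real.sqrt ((y-1)^2 + y^2*t^2))
        ((2*(y-1) + 2*y*t^2)/(2*Real.sqrt ((y-1)^2 + y^2*t^2))) y :=
      hq'.sqrt (ne_of_gt hq)
    have hP : HasDerivAt (fun y => Ptri y τ)
        (1/c + (2*(y-1) + 2*y*t^2)/(2*Real.sqrt ((y-1)^2 + y^2*t^2))) y := by
      have h1 : HasDerivAt (fun y : ℝ => 1 + y/c) (1/c) y := by
        simpa using ((hasDerivAt_id y).div_const c).const_add 1
      have := h1.fun_add hD
      simpa [Ptri, ← hcdef, ← htdef, add_assoc] using this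
    have hP2 : HasDerivAt (fun y => Ptri y τ ^ 2)
        (2 * Ptri y τ * (1/c + (2*(y-1) + 2*y*t^2)/(2*Real.sqrt ((y-1)^2 + y^2*t^2)))) y := by
      have := hP.fun_pow 2
      exact this.congr_deriv (by norm_num)
    have hdiv := hP2.div (hasDerivAt_id y) (ne_of_gt hy0)
    simp only [id_eq, mul_one] at hdiv
    exact hdiv
  have hsign : ∀ y ∈ Icc x x',
      (2 * Ptri y τ * (1/c + (2*(y-1) + 2*y*t^2)/(2*Real.sqrt ((y-1)^2 + y^2*t^2))) * y
        - Ptri y τ ^ 2) / y ^ 2 ≤ 0 := by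
    intro y hy
    have hy0 : 0 < y := by have := hy.1; linarith
    have hyc : y ≤ c := le_trans hy.2 hx'c
    have hyx : 1/2 ≤ y := le_trans hx hy.1
    have hq : 0 < (y-1)^2 + y^2*t^2 := by positivity
    set d := Real.sqrt ((y-1)^2 + y^2*t^2) with hddef
    have hd : 0 < d := Real.sqrt_pos.2 hq
    have hd2 : d^2 = (y-1)^2 + y^2*t^2 := Real.sq_sqrt hq.le
    have hPeq : Ptri y τ = 1 + y/c + d := by rw [Ptri, ← hcdef, ← htdef]
    have hPx : 1/c + (2*(y-1) + 2*y*t^2)/(2*d) = 1/c + ((y-1) + y*t^2)/d := by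
      rw [mul_comm 2 d, ← div_div]
      congr 1
      rw [mul_comm]
      field_simp
    have halg : 2*y*(1/c + (y-1+y*t^2)/d) ≤ 1 + y/c + d :=
      alg_x hyx hc hyc hct hd hd2
    have hPnn : 0 ≤ Ptri y τ := Ptri_nonneg (by linarith) hc
    apply div_nonpos_of_nonpos_of_nonneg _ (sq_nonneg y)
    rw [hPx]
    have hnum : 2 * Ptri y τ * (1/c + ((y-1) + y*t^2)/d) * y - Ptri y τ ^ 2
        = Ptri y τ * (2*y*(1/c + ((y-1) + y*t^2)/d) - Ptri y τ) := by ring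
    rw [hnum]
    apply mul_nonpos_of_nonneg_of_nonpos hPnn
    rw [hPeq]
    linarith
  have hanti : AntitoneOn f (Icc x x') :=
    antitoneOn_of_deriv_nonpos (convex_Icc x x')
      (fun y hy => (key y hy).continuousAt.continuousWithinAt)
      (fun y hy => ((key y (interior_subset hy)).differentiableAt.differentiableWithinAt))
      (fun y hy => by
        rw [(key y (interior_subset hy)).deriv]
        exact hsign y (interior_subset hy))
  have hfle : f x' ≤ f x := hanti (left_mem_Icc.2 hxx) (right_mem_Icc.2 hxx) hxx
  have hx0 : 0 < x := by linarith
  have hx0' : 0 < x' := by linarith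
  have : Ptri x' τ ^ 2 / x' ≤ Ptri x τ ^ 2 / x := hfle
  exact (div_le_div_iff₀ hx0' hx0).mp this

lemma mono_t {x θ θ' : ℝ} (hx : 1/2 ≤ x) (hx1 : x ≤ 1) (hθ : 0 < θ) (hθθ : θ ≤ θ')
    (hθ'2 : θ' < Real.pi/2) (hxc : x ≤ Real.cos θ') :
    Ptri x θ' ^ 2 * Real.tan θ ≤ Ptri x θ ^ 2 * Real.tan θ' := by
  have hx0 : 0 < x := by linarith
  set g : ℝ → ℝ := fun τ => Ptri x τ ^ 2 / Real.tan τ with hg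
  have key : ∀ τ ∈ Icc θ θ', HasDerivAt g
      ((2 * Ptri x τ *
          ((0 * Real.cos τ - x * -Real.sin τ) / Real.cos τ ^ 2
            + x^2*(2*Real.tan τ*(1/Real.cos τ^2))/(2*Real.sqrt ((x-1)^2 + x^2*Real.tan τ^2)))
          * Real.tan τ
        - Ptri x τ ^ 2 * (1/Real.cos τ^2)) / Real.tan τ ^ 2) τ := by
    intro τ hτm
    have hτ0 : 0 < τ := lt_of_lt_of_le hθ hτm.1
    have hτ2 : τ < Real.pi/2 := lt_of_le_of_lt hτm.2 hθ'2
    have hc : 0 < Real.cos τ := Real.cos_pos_of_mem_Ioo ⟨by linarith, hτ2⟩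
    have ht : 0 < Real.tan τ := Real.tan_pos_of_pos_of_lt_pi_div_two hτ0 hτ2
    have hq : 0 < (x-1)^2 + x^2*Real.tan τ^2 := by positivity
    have htan : HasDerivAt Real.tan (1/Real.cos τ^2) τ := Real.hasDerivAt_tan (ne_of_gt hc)
    have hinv : HasDerivAt (fun τ => x / Real.cos τ)
        ((0 * Real.cos τ - x * -Real.sin τ) / Real.cos τ ^ 2) τ :=
      (hasDerivAt_const τ x).div (Real.hasDerivAt_cos τ) (ne_of_gt hc)
    have hq' : HasDerivAt (fun τ => (x-1)^2 + x^2*Real.tan τ^2)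
        (x^2*(2*Real.tan τ*(1/Real.cos τ^2))) τ := by
      have h2 : HasDerivAt (fun τ => Real.tan τ^2) (2*Real.tan τ*(1/Real.cos τ^2)) τ := by
        simpa [mul_comm] using htan.fun_pow 2
      exact (h2.const_mul (x^2)).const_add ((x-1)^2)
    have hD : HasDerivAt (fun τ => Real.sqrt ((x-1)^2 + x^2*Real.tan τ^2))
        (x^2*(2*Real.tan τ*(1/Real.cos τ^2))/(2*Real.sqrt ((x-1)^2 + x^2*Real.tan τ^2))) τ :=
      hq'.sqrt (ne_of_gt hq)
    have hP : HasDerivAt (fun τ => Ptri x τ)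
        ((0 * Real.cos τ - x * -Real.sin τ) / Real.cos τ ^ 2
          + x^2*(2*Real.tan τ*(1/Real.cos τ^2))/(2*Real.sqrt ((x-1)^2 + x^2*Real.tan τ^2))) τ := by
      have h1 := (hinv.const_add 1).fun_add hD
      simpa [Ptri, add_assoc] using h1
    have hP2 : HasDerivAt (fun τ => Ptri x τ ^ 2)
        (2 * Ptri x τ *
          ((0 * Real.cos τ - x * -Real.sin τ) / Real.cos τ ^ 2
            + x^2*(2*Real.tan τ*(1/Real.cos τ^2))/(2*Real.sqrt ((x-1)^2 + x^2*Real.tan τ^2)))) τ := by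
      have := hP.fun_pow 2
      exact this.congr_deriv (by norm_num)
    have hdiv := hP2.div htan (ne_of_gt ht)
    exact hdiv
  have hsign : ∀ τ ∈ Icc θ θ',
      (2 * Ptri x τ *
          ((0 * Real.cos τ - x * -Real.sin τ) / Real.cos τ ^ 2
            + x^2*(2*Real.tan τ*(1/Real.cos τ^2))/(2*Real.sqrt ((x-1)^2 + x^2*Real.tan τ^2)))
          * Real.tan τ
        - Ptri x τ ^ 2 * (1/Real.cos τ^2)) / Real.tan τ ^ 2 ≤ 0 := by
    intro τ hτm
    have hτ0 : 0 < τ := lt_of_lt_of_le hθ hτm.1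
    have hτ2 : τ < Real.pi/2 := lt_of_le_of_lt hτm.2 hθ'2
    have hc : 0 < Real.cos τ := Real.cos_pos_of_mem_Ioo ⟨by linarith, hτ2⟩
    have ht : 0 < Real.tan τ := Real.tan_pos_of_pos_of_lt_pi_div_two hτ0 hτ2
    have hq : 0 < (x-1)^2 + x^2*Real.tan τ^2 := by positivity
    set d := Real.sqrt ((x-1)^2 + x^2*Real.tan τ^2) with hddef
    have hd : 0 < d := Real.sqrt_pos.2 hq
    have hd2 : d^2 = (x-1)^2 + x^2*Real.tan τ^2 := Real.sq_sqrt hq.le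
    have hcc : Real.cos θ' ≤ Real.cos τ :=
      Real.cos_le_cos_of_nonneg_of_le_pi (le_of_lt hτ0) (by linarith [Real.pi_pos]) hτm.2
    have hxcτ : x ≤ Real.cos τ := le_trans hxc hcc
    have hct : Real.cos τ^2*(1+Real.tan τ^2) = 1 := cos_sq_one_add_tan_sq (ne_of_gt hc)
    have hsin : Real.sin τ = Real.tan τ * Real.cos τ := (Real.tan_mul_cos (ne_of_gt hc)).symm
    have hPθeq : (0 * Real.cos τ - x * -Real.sin τ) / Real.cos τ ^ 2
          + x^2*(2*Real.tan τ*(1/Real.cos τ^2))/(2*d)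
        = x*Real.tan τ/Real.cos τ + x^2*Real.tan τ*(1/Real.cos τ^2)/d := by
      rw [hsin]
      field_simp
      ring
    have hPeq : Ptri x τ = 1 + x/Real.cos τ + d := by rw [Ptri]
    have halg : 2*(x*Real.tan τ/Real.cos τ + x^2*Real.tan τ*(1/Real.cos τ^2)/d)*Real.tan τ
        ≤ (1 + x/Real.cos τ + d)*(1/Real.cos τ^2) :=
      alg_t hx hx1 hc hxcτ ht hct hd hd2
    have hPnn : 0 ≤ Ptri x τ := Ptri_nonneg (by linarith) hc
    apply div_nonpos_of_nonpos_of_nonneg _ (sq_nonneg _)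
    rw [hPθeq]
    have hnum : 2 * Ptri x τ * (x*Real.tan τ/Real.cos τ + x^2*Real.tan τ*(1/Real.cos τ^2)/d)
          * Real.tan τ - Ptri x τ ^ 2 * (1/Real.cos τ^2)
        = Ptri x τ * (2*(x*Real.tan τ/Real.cos τ + x^2*Real.tan τ*(1/Real.cos τ^2)/d)*Real.tan τ
            - Ptri x τ * (1/Real.cos τ^2)) := by ring
    rw [hnum]
    apply mul_nonpos_of_nonneg_of_nonpos hPnn
    rw [hPeq]
    linarith
  have hanti : AntitoneOn g (Icc θ θ') :=
    antitoneOn_of_deriv_nonpos (convex_Icc θ θ')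
      (fun τ hτm => (key τ hτm).continuousAt.continuousWithinAt)
      (fun τ hτm => ((key τ (interior_subset hτm)).differentiableAt.differentiableWithinAt))
      (fun τ hτm => by
        rw [(key τ (interior_subset hτm)).deriv]
        exact hsign τ (interior_subset hτm))
  have hgle : g θ' ≤ g θ := hanti (left_mem_Icc.2 hθθ) (right_mem_Icc.2 hθθ) hθθ
  have ht1 : 0 < Real.tan θ :=
    Real.tan_pos_of_pos_of_lt_pi_div_two hθ (lt_of_le_of_lt hθθ hθ'2)
  have ht2 : 0 < Real.tan θ' :=
    Real.tan_pos_of_pos_of_lt_pi_div_two (lt_of_lt_of_le hθ hθθ) hθ'2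
  have : Ptri x θ' ^ 2 / Real.tan θ' ≤ Ptri x θ ^ 2 / Real.tan θ := hgle
  exact (div_le_div_iff₀ ht2 ht1).mp this


/-- For fixed `Λ ≥ 0`, `B̃₂` is monotone non-decreasing in each variable on the region
where the apex lies in the closed unit disk. -/
theorem statement15 (Λ : ℝ) (hΛ : 0 ≤ Λ) (x x' θ θ' : ℝ)
    (hx : 1 / 2 ≤ x) (hxx : x ≤ x') (hx' : x' ≤ 1)
    (hθ : 0 < θ) (hθθ : θ ≤ θ') (hθ' : θ' < Real.pi / 3)
    (hdisk : x' ^ 2 + x' ^ 2 * Real.tan θ' ^ 2 ≤ 1) :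
    B2t Λ x θ ≤ B2t Λ x' θ' := by
  have hpi := Real.pi_pos
  have hθ'2 : θ' < Real.pi/2 := by linarith
  have hθ'0 : 0 < θ' := lt_of_lt_of_le hθ hθθ
  have hθ2 : θ < Real.pi/2 := lt_of_le_of_lt hθθ hθ'2
  have hcθ' : 0 < Real.cos θ' := Real.cos_pos_of_mem_Ioo ⟨by linarith, hθ'2⟩
  have ht1 : 0 < Real.tan θ := Real.tan_pos_of_pos_of_lt_pi_div_two hθ hθ2
  have ht2 : 0 < Real.tan θ' := Real.tan_pos_of_pos_of_lt_pi_div_two hθ'0 hθ'2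
  have htt : Real.tan θ ≤ Real.tan θ' := by
    rcases eq_or_lt_of_le hθθ with h | h
    · rw [h]
    · exact (Real.tan_lt_tan_of_nonneg_of_lt_pi_div_two hθ.le hθ'2 h).le
  have hx0 : 0 < x := by linarith
  have hx0' : 0 < x' := lt_of_lt_of_le hx0 hxx
  have hct' : Real.cos θ'^2*(1+Real.tan θ'^2) = 1 := cos_sq_one_add_tan_sq (ne_of_gt hcθ')
  have hx'c : x' ≤ Real.cos θ' := by
    have h1 : x'^2*(1+Real.tan θ'^2) ≤ 1 := by linarith only [hdisk]
    have h2 : x'^2 ≤ Real.cos θ'^2 := by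
      nlinarith [h1, hct', sq_nonneg (Real.tan θ'), sq_nonneg (Real.cos θ' - x'), sq_nonneg (Real.cos θ' + x')]
    nlinarith [h2, hcθ', hx0', sq_nonneg (Real.cos θ' - x')]
  have hxle1 : x ≤ 1 := le_trans hxx hx'
  have m1 : Ptri x θ' ^ 2 * Real.tan θ ≤ Ptri x θ ^ 2 * Real.tan θ' :=
    mono_t hx hxle1 hθ hθθ hθ'2 (le_trans hxx hx'c)
  have m2 : Ptri x' θ' ^ 2 * x ≤ Ptri x θ' ^ 2 * x' :=
    mono_x hθ'0 hθ'2 hx hxx hx'c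
  have key : Ptri x' θ' ^ 2 * (x * Real.tan θ) ≤ Ptri x θ ^ 2 * (x' * Real.tan θ') := by
    have a1 := mul_le_mul_of_nonneg_right m2 ht1.le
    have a2 := mul_le_mul_of_nonneg_right m1 hx0'.le
    linarith only [a1, a2]
  have hA : 0 < Atri x θ := by unfold Atri; positivity
  have hA' : 0 < Atri x' θ' := by unfold Atri; positivity
  have hAA' : Atri x θ ≤ Atri x' θ' := by
    unfold Atri
    have := mul_le_mul hxx htt ht1.le hx0'.le
    linarith only [this]
  have key2 : Ptri x' θ' ^ 2 * Atri x θ ≤ Ptri x θ ^ 2 * Atri x' θ' := by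
    unfold Atri
    linarith only [key]
  set A := Atri x θ with hAdef
  set A' := Atri x' θ' with hA'def
  set P := Ptri x θ with hPdef
  set P' := Ptri x' θ' with hP'def
  have hPnn : 0 ≤ P := Ptri_nonneg hx0.le (Real.cos_pos_of_mem_Ioo ⟨by linarith, hθ2⟩)
  have hP'nn : 0 ≤ P' := Ptri_nonneg hx0'.le hcθ'
  set s := Real.sqrt (4 * Real.pi * A) with hsdef
  set s' := Real.sqrt (4 * Real.pi * A') with hs'def
  have hsnn : 0 ≤ s := Real.sqrt_nonneg _
  have hs'nn : 0 ≤ s' := Real.sqrt_nonneg _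
  have hs2 : s^2 = 4 * Real.pi * A := Real.sq_sqrt (by positivity)
  have hs'2 : s'^2 = 4 * Real.pi * A' := Real.sq_sqrt (by positivity)
  have hmm := mul_le_mul_of_nonneg_right key2
    (show (0:ℝ) ≤ 4*Real.pi*A*A' by positivity)
  have e1 : (P' * s' * A)^2 = P'^2 * A * (4*Real.pi*A'*A) := by
    have : (P' * s' * A)^2 = P'^2 * s'^2 * A^2 := by ring
    rw [this, hs'2]; ring
  have e2 : (P * s * A')^2 = P^2 * A' * (4*Real.pi*A*A') := by
    have : (P * s * A')^2 = P^2 * s^2 * A'^2 := by ring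
    rw [this, hs2]; ring
  have hsq : (P' * s' * A)^2 ≤ (P * s * A')^2 := by
    rw [e1, e2]; linarith only [hmm]
  have cross : P' * s' * A ≤ P * s * A' := by
    have h1 := Real.sqrt_le_sqrt hsq
    rwa [Real.sqrt_sq (by positivity), Real.sqrt_sq (by positivity)] at h1
  have e3 : s'^2 * A = s^2 * A' := by rw [hs2, hs'2]; ring
  have hpen : (P' + s')^2 / (4*A') ≤ (P + s)^2 / (4*A) := by
    rw [div_le_div_iff₀ (by positivity) (by positivity)]
    linarith only [key2, cross, e3]
  have hC : (0:ℝ) ≤ 4 * Real.pi ^ 2 / (3 + Real.sqrt (Real.pi * Real.sqrt 3)) ^ 2 := by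
    positivity
  have h1 : Λ * A ≤ Λ * A' := mul_le_mul_of_nonneg_left hAA' hΛ
  have h2 : 4 * Real.pi ^ 2 / (3 + Real.sqrt (Real.pi * Real.sqrt 3)) ^ 2 * (P' + s') ^ 2
        / (4 * A')
      ≤ 4 * Real.pi ^ 2 / (3 + Real.sqrt (Real.pi * Real.sqrt 3)) ^ 2 * (P + s) ^ 2
        / (4 * A) := by
    have h := mul_le_mul_of_nonneg_left hpen hC
    calc 4 * Real.pi ^ 2 / (3 + Real.sqrt (Real.pi * Real.sqrt 3)) ^ 2 * (P' + s') ^ 2 / (4 * A')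
        = 4 * Real.pi ^ 2 / (3 + Real.sqrt (Real.pi * Real.sqrt 3)) ^ 2 * ((P' + s') ^ 2 / (4 * A')) := by
          ring
      _ ≤ 4 * Real.pi ^ 2 / (3 + Real.sqrt (Real.pi * Real.sqrt 3)) ^ 2 * ((P + s) ^ 2 / (4 * A)) := h
      _ = 4 * Real.pi ^ 2 / (3 + Real.sqrt (Real.pi * Real.sqrt 3)) ^ 2 * (P + s) ^ 2 / (4 * A) := by
          ring
  simp only [B2t, ← hAdef, ← hA'def, ← hPdef, ← hP'def, ← hsdef, ← hs'def]
  linarith only [h1, h2]
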